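/- Let m ≥ 3 be odd and let d be an integer with gcd(d, 2^m - 1) = 1 such that the power function x ↦ x^d on F = GF(2^m) is maximum nonlinear. Assume that for all α, β ∈ F \ {0} with α ≠ β and all i, j ∈ GF(2) the cardinality |H^{i,j}(α,β) ∩ D_d| belongs to {2^(m-3), 2^(m-3) - 2^((m-3)/2), 2^(m-3) + 2^((m-3)/2)}. Then tr(y^d + (y+1)^d + 1) = 0 for all y ∈ F. -/

import Mathlib

attribute [local instance] Classical.propDecidable

noncomputable instance (m : ℕ) : Fintype (GaloisField 2 m) := Fintype.ofFinite _

/-- The absolute trace map from `GF(2^m)` to `GF(2)`. -/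
noncomputable def tr (m : ℕ) (x : GaloisField 2 m) : ZMod 2 :=
  Algebra.trace (ZMod 2) (GaloisField 2 m) x

/-- `(-1)^t` as an integer, for `t ∈ GF(2)`. -/
def chi (t : ZMod 2) : ℤ := (-1) ^ t.val

/-- The Walsh coefficient `∑_{x ∈ F} (-1)^(tr(γx + βx^d))` of the power map `x ↦ x^d`. -/
noncomputable def walsh (m d : ℕ) (β γ : GaloisField 2 m) : ℤ :=
  ∑ x : GaloisField 2 m, chi (tr m (γ * x + β * x ^ d))

/-- The power function `x ↦ x^d` on `GF(2^m)` is maximum nonlinear (almost bent). -/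
def MaxNonlinear (m d : ℕ) : Prop :=
  ∀ β : GaloisField 2 m, β ≠ 0 → ∀ γ : GaloisField 2 m,
    walsh m d β γ ∈ ({0, 2 ^ ((m + 1) / 2), -(2 ^ ((m + 1) / 2))} : Set ℤ)

/-- `D_d = {x ∈ F : tr(x^d) = 1}`. -/
noncomputable def Dd (m d : ℕ) : Finset (GaloisField 2 m) :=
  Finset.univ.filter (fun x => tr m (x ^ d) = 1)

/-- `H^i(α) = {x ∈ F : tr(αx) = i}`. -/
noncomputable def Hi (m : ℕ) (α : GaloisField 2 m) (i : ZMod 2) :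
    Finset (GaloisField 2 m) :=
  Finset.univ.filter (fun x => tr m (α * x) = i)

/-- `H^{i,j}(α,β) = {x ∈ F : tr(αx) = i and tr(βx) = j}`. -/
noncomputable def Hij (m : ℕ) (α β : GaloisField 2 m) (i j : ZMod 2) :
    Finset (GaloisField 2 m) :=
  Finset.univ.filter (fun x => tr m (α * x) = i ∧ tr m (β * x) = j)

/-!
Write `W γ` for the Walsh coefficient of `x ↦ x ^ d` at `(1, γ)`. Expanding the indicator of
`H^{0,0}(α, β) ∩ D_d` in characters gives `8 |H^{0,0}(α, β) ∩ D_d| = 2^m - (W α + W β + W (α + β))`,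
so the counting hypothesis makes `W α + W β + W (α + β)` an even multiple of `2^((m+1)/2)`.
Taking `α = x²`, `β = x` and using `W (x²) = W x` gives `W (x² + x) = 0`; as `x ↦ x² + x` maps onto
the kernel of the trace, `W` is supported on `tr γ = 1`. Hence
`2^m ∑ₓ (-1)^tr(x^d + (x+1)^d) = ∑ W(γ)² (-1)^tr γ = -∑ W(γ)² = -2^(2m)`,
which forces `tr (x^d + (x+1)^d) = 1` for every `x`.
-/

open Finset

lemma chi_add : ∀ s t : ZMod 2, chi (s + t) = chi s * chi t := by decide

lemma chi_zero : chi 0 = 1 := rfl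

lemma chi_one : chi 1 = -1 := rfl

lemma ite_eight_eq_chi (a b c : ZMod 2) :
    (if a = 0 ∧ b = 0 ∧ c = 1 then 8 else 0 : ℤ) = (1 + chi a) * (1 + chi b) * (1 - chi c) := by
  revert a b c; decide

lemma chi_eq_neg_one_iff : ∀ t : ZMod 2, chi t = -1 ↔ t = 1 := by decide

lemma eq_one_of_sum_chi_eq_neg_card {ι : Type*} [Fintype ι] {f : ι → ZMod 2}
    (h : ∑ i, chi (f i) = -Fintype.card ι) (i : ι) : f i = 1 := by
  have hnonneg : ∀ t : ZMod 2, 0 ≤ 1 + chi t := by decide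
  have hsum : ∑ i, (1 + chi (f i)) = 0 := by
    rw [sum_add_distrib, h, sum_const, card_univ, nsmul_eq_mul, mul_one, add_neg_cancel]
  have hi := (sum_eq_zero_iff_of_nonneg fun i _ => hnonneg (f i)).mp hsum i (mem_univ i)
  exact (chi_eq_neg_one_iff _).mp (by linarith)

lemma pow_bijective_of_coprime {K : Type*} [Field K] [Fintype K] {d : ℕ} (hd : d ≠ 0)
    (hcop : Nat.Coprime d (Fintype.card K - 1)) : Function.Bijective fun x : K => x ^ d := by
  refine Finite.injective_iff_bijective.mp fun x y hxy => ?_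
  by_cases hy : y = 0
  · subst hy
    rwa [zero_pow hd, pow_eq_zero_iff hd] at hxy
  have hx : x ≠ 0 := fun hx => hy (by rwa [hx, zero_pow hd, eq_comm, pow_eq_zero_iff hd] at hxy)
  have hu : (x / y) ^ d = 1 := by rw [div_pow, hxy, div_self (pow_ne_zero d hy)]
  have hq : (x / y) ^ (Fintype.card K - 1) = 1 :=
    FiniteField.pow_card_sub_one_eq_one _ (div_ne_zero hx hy)
  have := pow_gcd_eq_one.mpr ⟨hu, hq⟩
  rwa [hcop, pow_one, div_eq_one_iff_eq hy] at this

section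

variable {m : ℕ}

lemma tr_add (a b : GaloisField 2 m) : tr m (a + b) = tr m a + tr m b :=
  map_add _ a b

lemma tr_zero : tr m 0 = 0 := map_zero _

lemma chi_tr_add (a b : GaloisField 2 m) :
    chi (tr m (a + b)) = chi (tr m a) * chi (tr m b) := by
  rw [tr_add, chi_add]

lemma tr_one_of_odd (hm : Odd m) : tr m 1 = 1 := by
  have hm0 : m ≠ 0 := hm.pos.ne'
  rw [tr, ← map_one (algebraMap (ZMod 2) _), Algebra.trace_algebraMap,
    GaloisField.finrank 2 hm0, nsmul_eq_mul, mul_one, ZMod.natCast_eq_one_iff_odd.mpr hm]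

lemma tr_sq (x : GaloisField 2 m) : tr m (x ^ 2) = tr m x :=
  Algebra.trace_eq_of_algEquiv (FiniteField.frobeniusAlgEquiv (ZMod 2) (GaloisField 2 m) 2) x

lemma card_galoisField (hm : m ≠ 0) : Fintype.card (GaloisField 2 m) = 2 ^ m := by
  rw [← Nat.card_eq_fintype_card, GaloisField.card 2 m hm]

lemma sum_chi_tr : ∑ u : GaloisField 2 m, chi (tr m u) = 0 := by
  obtain ⟨u₀, hu₀⟩ := Algebra.trace_surjective (ZMod 2) (GaloisField 2 m) 1
  have h : ∑ u, chi (tr m (u + u₀)) = ∑ u, chi (tr m u) :=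
    Fintype.sum_equiv (Equiv.addRight u₀) _ _ fun _ => rfl
  simp only [chi_tr_add, show tr m u₀ = 1 from hu₀, chi_one, mul_neg_one,
    sum_neg_distrib] at h
  omega

lemma sum_chi_tr_mul {γ : GaloisField 2 m} (hγ : γ ≠ 0) :
    ∑ x : GaloisField 2 m, chi (tr m (γ * x)) = 0 :=
  (Fintype.sum_equiv (Equiv.mulLeft₀ γ hγ) _ _ fun _ => rfl).trans sum_chi_tr

lemma sum_chi_tr_mul_right (hm : m ≠ 0) (z : GaloisField 2 m) :
    ∑ γ : GaloisField 2 m, chi (tr m (γ * z)) = if z = 0 then 2 ^ m else 0 := by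
  split_ifs with hz
  · simp [hz, tr_zero, chi_zero, card_galoisField hm]
  · simpa only [mul_comm] using sum_chi_tr_mul hz

lemma exists_sq_add_self_eq_of_tr_eq_zero {γ : GaloisField 2 m} (hγ : tr m γ = 0) :
    ∃ x, x ^ 2 + x = γ := by
  let φ : GaloisField 2 m →+ GaloisField 2 m :=
    { toFun := fun x => x ^ 2 + x
      map_zero' := by simp
      map_add' := fun x y => by rw [CharTwo.add_sq]; ring }
  -- `range φ ≤ ker T`, and both have index 2 since `ker φ = {0, 1}` and `T` is onto
  let T : GaloisField 2 m →+ ZMod 2 := (Algebra.trace (ZMod 2) (GaloisField 2 m)).toAddMonoidHom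
  have hker : (φ.ker : Set (GaloisField 2 m)) = {0, 1} := by
    ext x
    have : x ^ 2 + x = x * (x + 1) := by ring
    simp [φ, this, add_eq_zero_iff_eq_neg, CharTwo.neg_eq]
  have hcard_ker : Nat.card φ.ker = 2 := by
    rw [← SetLike.coe_sort_coe, hker, Nat.card_coe_set_eq, Set.ncard_pair zero_ne_one]
  have hle : φ.range ≤ T.ker := by
    rintro _ ⟨x, rfl⟩
    change tr m (x ^ 2 + x) = 0
    rw [tr_add, tr_sq, CharTwo.add_self_eq_zero]
  have hT : T.range = ⊤ := AddMonoidHom.range_eq_top.mpr (Algebra.trace_surjective _ _)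
  have hφ := φ.ker.card_mul_index
  have hT' := T.ker.card_mul_index
  rw [AddSubgroup.index_ker, hcard_ker] at hφ
  rw [AddSubgroup.index_ker, hT, AddSubgroup.card_top, Nat.card_zmod] at hT'
  have hrange := AddSubgroup.eq_of_le_of_card_ge hle (by omega)
  exact hrange.ge hγ

lemma walsh_sq_sq (d : ℕ) (β γ : GaloisField 2 m) :
    walsh m d (β ^ 2) (γ ^ 2) = walsh m d β γ := by
  refine (Fintype.sum_equiv (FiniteField.frobeniusAlgEquiv (ZMod 2) (GaloisField 2 m) 2).toEquiv
    _ _ fun x => ?_).symm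
  have h : γ ^ 2 * x ^ 2 + β ^ 2 * (x ^ 2) ^ d = (γ * x + β * x ^ d) ^ 2 := by
    rw [CharTwo.add_sq]; ring
  simp only [AlgEquiv.toEquiv_eq_coe, EquivLike.coe_coe, FiniteField.frobeniusAlgEquiv_apply,
    ZMod.card, h, tr_sq]

lemma walsh_zero_right {d : ℕ} (hd : Function.Bijective fun x : GaloisField 2 m => x ^ d)
    {β : GaloisField 2 m} (hβ : β ≠ 0) : walsh m d β 0 = 0 := by
  simp only [walsh, zero_mul, zero_add]
  exact ((Equiv.mulLeft₀ β hβ).bijective.comp hd).sum_comp (fun u => chi (tr m u)) ▸ sum_chi_tr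

lemma sum_walsh_sq_mul_chi (hm : m ≠ 0) (d : ℕ) (β s : GaloisField 2 m) :
    ∑ γ, walsh m d β γ ^ 2 * chi (tr m (γ * s))
      = 2 ^ m * ∑ x, chi (tr m (β * x ^ d + β * (x + s) ^ d)) := by
  have key : ∀ x y : GaloisField 2 m,
      ∑ γ, chi (tr m (γ * x + β * x ^ d)) * chi (tr m (γ * y + β * y ^ d)) * chi (tr m (γ * s))
        = if y = x + s then 2 ^ m * chi (tr m (β * x ^ d + β * y ^ d)) else 0 := by
    intro x y
    have h : ∀ γ, chi (tr m (γ * x + β * x ^ d)) * chi (tr m (γ * y + β * y ^ d))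
        * chi (tr m (γ * s)) = chi (tr m (β * x ^ d + β * y ^ d)) * chi (tr m (γ * (x + y + s))) := by
      intro γ
      simp only [← chi_tr_add]
      congr 2
      ring
    have hzero : x + y + s = 0 ↔ y = x + s := by
      rw [add_right_comm, add_comm, add_eq_zero_iff_eq_neg, CharTwo.neg_eq]
    rw [sum_congr rfl fun γ _ => h γ, ← mul_sum, sum_chi_tr_mul_right hm]
    simp only [hzero]
    split_ifs <;> ring
  calc ∑ γ, walsh m d β γ ^ 2 * chi (tr m (γ * s))
      = ∑ γ, ∑ x, ∑ y, chi (tr m (γ * x + β * x ^ d)) * chi (tr m (γ * y + β * y ^ d))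
          * chi (tr m (γ * s)) := by
        simp only [walsh, sq, sum_mul_sum]
        simp only [sum_mul]
    _ = ∑ x, ∑ y, ∑ γ, chi (tr m (γ * x + β * x ^ d)) * chi (tr m (γ * y + β * y ^ d))
          * chi (tr m (γ * s)) := by
        rw [sum_comm]
        exact sum_congr rfl fun x _ => sum_comm
    _ = 2 ^ m * ∑ x, chi (tr m (β * x ^ d + β * (x + s) ^ d)) := by
        simp only [key, sum_ite_eq', mem_univ, if_true, mul_sum]

lemma eight_mul_card_Hij_inter_Dd (hm : m ≠ 0) {d : ℕ}
    (hd : Function.Bijective fun x : GaloisField 2 m => x ^ d) {α β : GaloisField 2 m}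
    (hα : α ≠ 0) (hβ : β ≠ 0) (hαβ : α ≠ β) :
    8 * ((Hij m α β 0 0 ∩ Dd m d).card : ℤ)
      = 2 ^ m - (walsh m d 1 α + walsh m d 1 β + walsh m d 1 (α + β)) := by
  have hset : Hij m α β 0 0 ∩ Dd m d
      = univ.filter fun x => tr m (α * x) = 0 ∧ tr m (β * x) = 0 ∧ tr m (x ^ d) = 1 := by
    ext x
    simp [Hij, Dd, and_assoc]
  -- each character sum is written in the shape of a summand of `walsh m d 1 _`
  have hpt : ∀ x : GaloisField 2 m,
      8 * ((if tr m (α * x) = 0 ∧ tr m (β * x) = 0 ∧ tr m (x ^ d) = 1 then 1 else 0 : ℕ) : ℤ)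
        = 1 + chi (tr m (α * x)) + chi (tr m (β * x)) + chi (tr m ((α + β) * x))
          - chi (tr m (0 * x + 1 * x ^ d)) - chi (tr m (α * x + 1 * x ^ d))
          - chi (tr m (β * x + 1 * x ^ d)) - chi (tr m ((α + β) * x + 1 * x ^ d)) := by
    intro x
    rw [Nat.cast_ite, Nat.cast_one, Nat.cast_zero, mul_ite, mul_one, mul_zero, ite_eight_eq_chi]
    simp only [zero_mul, one_mul, zero_add, add_mul, chi_tr_add]
    ring
  have hαβ' : α + β ≠ 0 := by rwa [Ne, add_eq_zero_iff_eq_neg, CharTwo.neg_eq]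
  rw [hset, card_filter, Nat.cast_sum, mul_sum, sum_congr rfl fun x _ => hpt x]
  simp only [sum_add_distrib, sum_sub_distrib, sum_const, card_univ, card_galoisField hm,
    sum_chi_tr_mul hα, sum_chi_tr_mul hβ, sum_chi_tr_mul hαβ']
  have h0 := walsh_zero_right hd one_ne_zero
  simp only [walsh] at h0 ⊢
  rw [h0]
  ring

lemma walsh_sq_add_self_eq_zero {d : ℕ} (hm3 : 3 ≤ m) (hmodd : Odd m)
    (hd : Function.Bijective fun x : GaloisField 2 m => x ^ d) (hmax : MaxNonlinear m d)
    (hinter : ∀ α β : GaloisField 2 m, α ≠ 0 → β ≠ 0 → α ≠ β →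
      ((Hij m α β 0 0 ∩ Dd m d).card : ℤ) ∈
        ({2 ^ (m - 3), 2 ^ (m - 3) - 2 ^ ((m - 3) / 2),
          2 ^ (m - 3) + 2 ^ ((m - 3) / 2)} : Set ℤ))
    (x : GaloisField 2 m) : walsh m d 1 (x ^ 2 + x) = 0 := by
  by_cases hx : x ^ 2 + x = 0
  · rw [hx]
    exact walsh_zero_right hd one_ne_zero
  have hx0 : x ≠ 0 := by rintro rfl; simp at hx
  have hx2 : x ^ 2 ≠ x := fun h => hx (by rw [h, CharTwo.add_self_eq_zero])
  have hcount := eight_mul_card_Hij_inter_Dd (by omega) hd (pow_ne_zero 2 hx0) hx0 hx2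
  have hN := hinter _ _ (pow_ne_zero 2 hx0) hx0 hx2
  have hWx := hmax 1 one_ne_zero x
  have hWy := hmax 1 one_ne_zero (x ^ 2 + x)
  have hsq : walsh m d 1 (x ^ 2) = walsh m d 1 x := by simpa using walsh_sq_sq d 1 x
  rw [hsq] at hcount
  obtain ⟨j, rfl⟩ : ∃ j, m = 2 * j + 3 := by
    obtain ⟨k, rfl⟩ := hmodd
    exact ⟨k - 1, by omega⟩
  have he₁ : (2 * j + 3 + 1) / 2 = j + 2 := by omega
  have he₂ : 2 * j + 3 - 3 = 2 * j := by omega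
  have he₃ : (2 * j + 3 - 3) / 2 = j := by omega
  rw [he₁] at hWx hWy
  rw [he₃, he₂] at hN
  have hp₁ : (2 : ℤ) ^ (2 * j + 3) = 8 * 2 ^ (2 * j) := by ring
  have hp₂ : (2 : ℤ) ^ (j + 2) = 4 * 2 ^ j := by ring
  have hpos : (0 : ℤ) < 2 ^ j := by positivity
  simp only [Set.mem_insert_iff, Set.mem_singleton_iff] at hN hWx hWy
  rw [hp₁] at hcount
  rw [hp₂] at hWx hWy
  -- `2 W x + W (x² + x) ∈ {0, ±2^(j+3)}` with `W x, W (x² + x) ∈ {0, ±2^(j+2)}`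
  rcases hN with hN | hN | hN <;> rcases hWx with hWx | hWx | hWx <;>
    rcases hWy with hWy | hWy | hWy <;> linarith

lemma tr_pow_add_pow_add_one_eq_one {d : ℕ} (hm : m ≠ 0)
    (hW : ∀ γ : GaloisField 2 m, tr m γ = 0 → walsh m d 1 γ = 0) (x : GaloisField 2 m) :
    tr m (x ^ d + (x + 1) ^ d) = 1 := by
  have hParseval := sum_walsh_sq_mul_chi hm d 1 0
  simp only [mul_zero, tr_zero, chi_zero, mul_one, add_zero, CharTwo.add_self_eq_zero, sum_const,
    card_univ, card_galoisField hm, nsmul_eq_mul] at hParseval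
  have hshift := sum_walsh_sq_mul_chi hm d 1 1
  have hpt : ∀ γ : GaloisField 2 m, walsh m d 1 γ ^ 2 * chi (tr m γ) = -walsh m d 1 γ ^ 2 := by
    intro γ
    obtain h | h : tr m γ = 0 ∨ tr m γ = 1 := by generalize tr m γ = t; revert t; decide
    · simp [hW γ h]
    · rw [h, chi_one]
      ring
  simp only [mul_one, one_mul, hpt, sum_neg_distrib, hParseval] at hshift
  refine eq_one_of_sum_chi_eq_neg_card (f := fun x => tr m (x ^ d + (x + 1) ^ d)) ?_ x
  rw [card_galoisField hm]
  push_cast at hshift ⊢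
  refine mul_left_cancel₀ (pow_ne_zero m (two_ne_zero : (2 : ℤ) ≠ 0)) ?_
  linarith

end

/-- Under the hypotheses of the main theorem, `tr(y^d + (y+1)^d + 1) = 0`
for all `y ∈ GF(2^m)`. -/
theorem stmt11 (m : ℕ) (hm3 : 3 ≤ m) (hmodd : Odd m) (d : ℕ)
    (hgcd : Nat.gcd d (2 ^ m - 1) = 1) (hmax : MaxNonlinear m d)
    (hinter : ∀ α β : GaloisField 2 m, α ≠ 0 → β ≠ 0 → α ≠ β → ∀ i j : ZMod 2,
      ((Hij m α β i j ∩ Dd m d).card : ℤ) ∈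
        ({2 ^ (m - 3), 2 ^ (m - 3) - 2 ^ ((m - 3) / 2),
          2 ^ (m - 3) + 2 ^ ((m - 3) / 2)} : Set ℤ)) :
    ∀ y : GaloisField 2 m, tr m (y ^ d + (y + 1) ^ d + 1) = 0 := by
  have hm : m ≠ 0 := by omega
  have hd0 : d ≠ 0 := by
    rintro rfl
    have : 2 ^ 3 ≤ 2 ^ m := Nat.pow_le_pow_right two_pos hm3
    rw [Nat.gcd_zero_left] at hgcd
    omega
  have hd := pow_bijective_of_coprime hd0 (by rwa [card_galoisField hm])
  have hW : ∀ γ : GaloisField 2 m, tr m γ = 0 → walsh m d 1 γ = 0 := by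
    intro γ hγ
    obtain ⟨x, rfl⟩ := exists_sq_add_self_eq_of_tr_eq_zero hγ
    exact walsh_sq_add_self_eq_zero hm3 hmodd hd hmax
      (fun α β hα hβ hαβ => hinter α β hα hβ hαβ 0 0) x
  intro y
  rw [tr_add, tr_pow_add_pow_add_one_eq_one hm hW y, tr_one_of_odd hmodd]
  decide
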